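/- arXiv:1706.09389 — 4 statements merged into one kernel-verified Lean document; each statement's English description precedes it below -/
import Mathlib

section
/- If m and n are both odd, then in any m × n Numbrix solution, every odd value occupies a cell (i, j) with i + j even, and every even value occupies a cell with i + j odd (indexing coordinates from 0). -/
/-- Two cells of an `m × n` board are adjacent if they agree in one coordinate
and differ by exactly 1 in the other. -/
def Adj {m n : ℕ} (a b : Fin m × Fin n) : Prop :=
  (a.1 = b.1 ∧ (a.2.val + 1 = b.2.val ∨ b.2.val + 1 = a.2.val)) ∨
  (a.2 = b.2 ∧ (a.1.val + 1 = b.1.val ∨ b.1.val + 1 = a.1.val))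

/-- A Numbrix solution on an `m × n` board: a bijection onto `{1, …, m*n}`
(equivalently, an injective map with values in `[1, m*n]`) such that cells
carrying consecutive values are adjacent. -/
def IsNumbrix {m n : ℕ} (f : Fin m × Fin n → ℕ) : Prop :=
  (∀ c, 1 ≤ f c ∧ f c ≤ m * n) ∧ Function.Injective f ∧
    ∀ c c', f c' = f c + 1 → Adj c c'

/-!
Along the path `1, 2, …, mn` both the parity of the value and the colour of the cell flip at every
step, so `ε = (-1) ^ f c * (-1) ^ (i + j)` is the same for all cells `c = (i, j)`. Summing
`(-1) ^ f c = ε * (-1) ^ (i + j)` over the board gives `-1` on the left, since the values run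
through `1, …, mn` with `mn` odd, and `ε` on the right, since the colour sum factors as
`(∑ i, (-1) ^ i) * (∑ j, (-1) ^ j) = 1`. Hence `ε = -1`.
-/

open Finset

lemma sum_Icc_one_neg_one_pow {N : ℕ} (hN : Odd N) : ∑ k ∈ Icc 1 N, (-1 : ℤ) ^ k = -1 := by
  rw [← Ico_add_one_right_eq_Icc, sum_Ico_eq_sum_range, Nat.add_sub_cancel]
  simp [pow_add, neg_one_geom_sum, Nat.not_even_iff_odd.2 hN]

section Enumeration

variable {α : Type*} [Fintype α] {f : α → ℕ}

lemma image_univ_eq_Icc_of_injective (hf : Function.Injective f)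
    (hmem : ∀ a, f a ∈ Icc 1 (Fintype.card α)) : univ.image f = Icc 1 (Fintype.card α) :=
  eq_of_subset_of_card_le (fun _ hk ↦ by obtain ⟨a, -, rfl⟩ := mem_image.1 hk; exact hmem a)
    (by simp [card_image_of_injective _ hf])

lemma apply_eq_of_invariant_succ {β : Type*} {g : α → β} (hf : Function.Injective f)
    (hmem : ∀ a, f a ∈ Icc 1 (Fintype.card α)) (hg : ∀ a a', f a' = f a + 1 → g a' = g a)
    (a a' : α) : g a = g a' := by
  have hsurj : ∀ k ∈ Icc 1 (Fintype.card α), ∃ a, f a = k := fun k hk ↦ by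
    simpa [← image_univ_eq_Icc_of_injective hf hmem] using hk
  have hbound : ∀ a, 1 ≤ f a ∧ f a ≤ Fintype.card α := fun a ↦ mem_Icc.1 (hmem a)
  obtain ⟨a₁, ha₁⟩ := hsurj 1 (by simpa using (hbound a).1.trans (hbound a).2)
  suffices h : ∀ k a, f a = k + 1 → g a = g a₁ from
    (h (f a - 1) a (by grind)).trans (h (f a' - 1) a' (by grind)).symm
  intro k
  induction k with
  | zero => exact fun a ha ↦ congrArg g (hf (ha.trans ha₁.symm))
  | succ k ih =>
    intro a ha
    obtain ⟨b, hb⟩ := hsurj (k + 1) (mem_Icc.2 ⟨by omega, by grind⟩)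
    exact (hg b a (by omega)).trans (ih b hb)

end Enumeration

def checkerSign {m n : ℕ} (c : Fin m × Fin n) : ℤ := (-1) ^ (c.1.val + c.2.val)

lemma checkerSign_mul_self {m n : ℕ} (c : Fin m × Fin n) :
    checkerSign c * checkerSign c = 1 := by
  rw [checkerSign, ← pow_add, ← two_mul, pow_mul, neg_one_sq, one_pow]

lemma Adj.checkerSign_eq_neg {m n : ℕ} {a b : Fin m × Fin n} (h : Adj a b) :
    checkerSign b = -checkerSign a := by
  have : b.1.val + b.2.val + 1 = a.1.val + a.2.val ∨
      a.1.val + a.2.val + 1 = b.1.val + b.2.val := by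
    rcases h with ⟨h₁, h₂⟩ | ⟨h₁, h₂⟩ <;> · have := congrArg Fin.val h₁; omega
  unfold checkerSign
  rcases this with h | h <;> rw [← h, pow_succ] <;> ring

lemma sum_checkerSign {m n : ℕ} (hm : Odd m) (hn : Odd n) :
    ∑ c : Fin m × Fin n, checkerSign c = 1 := by
  simp [checkerSign, Fintype.sum_prod_type, pow_add, ← mul_sum, Fin.sum_neg_one_pow,
    Nat.not_even_iff_odd.2 hm, Nat.not_even_iff_odd.2 hn]

namespace IsNumbrix

variable {m n : ℕ} {f : Fin m × Fin n → ℕ}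

lemma mem_Icc_card (hf : IsNumbrix f) (c : Fin m × Fin n) :
    f c ∈ Icc 1 (Fintype.card (Fin m × Fin n)) := by
  simpa using hf.1 c

lemma sum_neg_one_pow (hf : IsNumbrix f) (hm : Odd m) (hn : Odd n) :
    ∑ c, (-1 : ℤ) ^ f c = -1 := by
  rw [← sum_image (fun _ _ _ _ h ↦ hf.2.1 h),
    image_univ_eq_Icc_of_injective hf.2.1 hf.mem_Icc_card,
    Fintype.card_prod, Fintype.card_fin, Fintype.card_fin, sum_Icc_one_neg_one_pow (hm.mul hn)]

lemma neg_one_pow_mul_checkerSign_eq (hf : IsNumbrix f) (c c' : Fin m × Fin n) :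
    (-1 : ℤ) ^ f c * checkerSign c = (-1) ^ f c' * checkerSign c' :=
  apply_eq_of_invariant_succ (g := fun c ↦ (-1 : ℤ) ^ f c * checkerSign c) hf.2.1
    hf.mem_Icc_card (fun a a' h ↦ by
      rw [h, (hf.2.2 a a' h).checkerSign_eq_neg, pow_succ]; ring) c c'

lemma neg_one_pow_mul_checkerSign (hf : IsNumbrix f) (hm : Odd m) (hn : Odd n)
    (c : Fin m × Fin n) : (-1 : ℤ) ^ f c * checkerSign c = -1 := calc
  _ = ∑ c', (-1) ^ f c * checkerSign c * checkerSign c' := by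
    rw [← mul_sum, sum_checkerSign hm hn, mul_one]
  _ = ∑ c', (-1 : ℤ) ^ f c' := sum_congr rfl fun c' _ ↦ by
    rw [hf.neg_one_pow_mul_checkerSign_eq c c', mul_assoc, checkerSign_mul_self, mul_one]
  _ = -1 := hf.sum_neg_one_pow hm hn

end IsNumbrix

theorem odd_odd_parity (m n : ℕ) (hm : Odd m) (hn : Odd n)
    (f : Fin m × Fin n → ℕ) (hf : IsNumbrix f) :
    ∀ c : Fin m × Fin n,
      (Odd (f c) → Even (c.1.val + c.2.val)) ∧
      (Even (f c) → Odd (c.1.val + c.2.val)) := by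
  intro c
  have hodd : Odd (f c + (c.1.val + c.2.val)) := by
    rw [← neg_one_pow_eq_neg_one_iff_odd (by decide : (-1 : ℤ) ≠ 1), pow_add]
    exact hf.neg_one_pow_mul_checkerSign hm hn c
  exact ⟨fun h ↦ by grind, fun h ↦ by grind⟩
end

section
/- The first column of the horizontal zig-zag solution determines it uniquely: if f is the zig-zag solution with f(i, 0) = i·n + 1 for i even and f(i, 0) = (i+1)·n for i odd (0-based), then any m × n Numbrix solution g satisfying g(i, 0) = f(i, 0) for all i equals f. -/
variable {m n : ℕ}

theorem Adj.symm {a b : Fin m × Fin n} (h : Adj a b) : Adj b a := by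
  rcases h with ⟨h₁, h₂⟩ | ⟨h₁, h₂⟩
  · exact Or.inl ⟨h₁.symm, h₂.symm⟩
  · exact Or.inr ⟨h₁.symm, h₂.symm⟩

theorem Adj.snd_le_or_eq_right {a b : Fin m × Fin n} (h : Adj a b) :
    b.2.val ≤ a.2.val ∨ (b.1 = a.1 ∧ b.2.val = a.2.val + 1) := by
  rcases h with ⟨h₁, h₂ | h₂⟩ | ⟨h₂, -⟩
  · exact Or.inr ⟨h₁.symm, h₂.symm⟩
  · omega
  · exact Or.inl h₂.ge

theorem IsNumbrix.exists_apply_eq {g : Fin m × Fin n → ℕ} (hg : IsNumbrix g) {v : ℕ}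
    (hv : v ∈ Finset.Icc 1 (m * n)) : ∃ c, g c = v := by
  have himage : Finset.univ.image g = Finset.Icc 1 (m * n) := by
    refine Finset.eq_of_subset_of_card_le ?_ ?_
    · intro w hw
      obtain ⟨c, -, rfl⟩ := Finset.mem_image.mp hw
      exact Finset.mem_Icc.mpr (hg.1 c)
    · rw [Finset.card_image_of_injective _ hg.2.1, Finset.card_univ, Fintype.card_prod,
        Fintype.card_fin, Fintype.card_fin, Nat.card_Icc, Nat.add_sub_cancel]
  rw [← himage] at hv
  obtain ⟨c, -, hc⟩ := Finset.mem_image.mp hv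
  exact ⟨c, hc⟩

theorem IsNumbrix.adj_of_apply_eq_succ_or {g : Fin m × Fin n → ℕ} (hg : IsNumbrix g)
    {c d : Fin m × Fin n} (h : g d = g c + 1 ∨ g d + 1 = g c) : Adj c d := by
  rcases h with h | h
  · exact hg.2.2 c d h
  · exact (hg.2.2 d c h.symm).symm

theorem IsNumbrix.apply_eq_of_eq_on_adj {f g : Fin m × Fin n → ℕ} (hg : IsNumbrix g)
    (hf : Function.Injective f) {c c' : Fin m × Fin n} (hc' : f c' ∈ Finset.Icc 1 (m * n))
    (hcons : f c' = f c + 1 ∨ f c' + 1 = f c) (hc : g c = f c)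
    (hadj : ∀ d, Adj c d → d ≠ c' → g d = f d) : g c' = f c' := by
  obtain ⟨d, hd⟩ := hg.exists_apply_eq hc'
  have hcd : Adj c d := hg.adj_of_apply_eq_succ_or (by rwa [hd, hc])
  by_cases hdc' : d = c'
  · subst hdc'; exact hd
  · exact absurd (hf ((hadj d hcd hdc').symm.trans hd)) hdc'

theorem IsNumbrix.eq_of_eq_on_col_zero {f g : Fin m × Fin n → ℕ} (hg : IsNumbrix g)
    (hf : Function.Injective f) (hf_mem : ∀ c, f c ∈ Finset.Icc 1 (m * n))
    (hrow : ∀ (r : Fin m) (b : ℕ) (hb : b + 1 < n),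
      f (r, ⟨b + 1, hb⟩) = f (r, ⟨b, by omega⟩) + 1 ∨
        f (r, ⟨b + 1, hb⟩) + 1 = f (r, ⟨b, by omega⟩))
    (hcol : ∀ c : Fin m × Fin n, c.2.val = 0 → g c = f c) : g = f := by
  suffices h : ∀ b, ∀ c : Fin m × Fin n, c.2.val ≤ b → g c = f c from
    funext fun c => h _ c le_rfl
  intro b
  induction b with
  | zero => exact fun c hc => hcol c (Nat.le_zero.mp hc)
  | succ b ih =>
    rintro ⟨r, j, hj⟩ hjb
    dsimp only at hjb
    rcases Nat.lt_or_ge j (b + 1) with hlt | hge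
    · exact ih _ (Nat.lt_succ_iff.mp hlt)
    obtain rfl : j = b + 1 := by omega
    refine hg.apply_eq_of_eq_on_adj hf (c := (r, ⟨b, by omega⟩)) (hf_mem _) (hrow r b hj)
      (ih _ le_rfl) fun d hd hne => ih d ?_
    rcases hd.snd_le_or_eq_right with hle | ⟨h₁, h₂⟩
    · exact hle
    · exact (hne (Prod.ext h₁ (Fin.ext h₂))).elim

def zigzag (m n : ℕ) : Fin m × Fin n → ℕ := fun c =>
  if Even c.1.val then c.1.val * n + c.2.val + 1 else c.1.val * n + (n - c.2.val)

theorem zigzag_mem_Ioc (c : Fin m × Fin n) :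
    c.1.val * n < zigzag m n c ∧ zigzag m n c ≤ c.1.val * n + n := by
  have := c.2.isLt
  simp only [zigzag]
  split_ifs <;> omega

theorem zigzag_sub_one_div (c : Fin m × Fin n) : (zigzag m n c - 1) / n = c.1.val := by
  have := zigzag_mem_Ioc c
  exact Nat.div_eq_of_lt_le (by omega) (by rw [add_one_mul]; omega)

theorem zigzag_mem_Icc (c : Fin m × Fin n) : zigzag m n c ∈ Finset.Icc 1 (m * n) := by
  have hc := zigzag_mem_Ioc c
  have hrow : c.1.val * n + n ≤ m * n := by
    rw [← add_one_mul]; exact Nat.mul_le_mul_right n c.1.isLt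
  exact Finset.mem_Icc.mpr ⟨by omega, by omega⟩

theorem zigzag_injective : Function.Injective (zigzag m n) := by
  rintro ⟨r, i⟩ ⟨r', j⟩ h
  obtain rfl : r = r' := Fin.ext <| by
    rw [← zigzag_sub_one_div (r, i), h, zigzag_sub_one_div]
  have := i.isLt
  have := j.isLt
  refine Prod.ext rfl (Fin.ext ?_)
  dsimp only [zigzag] at h ⊢
  split_ifs at h <;> omega

theorem zigzag_row_succ (r : Fin m) (b : ℕ) (hb : b + 1 < n) :
    zigzag m n (r, ⟨b + 1, hb⟩) = zigzag m n (r, ⟨b, by omega⟩) + 1 ∨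
      zigzag m n (r, ⟨b + 1, hb⟩) + 1 = zigzag m n (r, ⟨b, by omega⟩) := by
  simp only [zigzag]
  split_ifs <;> omega

theorem zigzag_first_column_determines (m n : ℕ) (hn : 0 < n)
    (g : Fin m × Fin n → ℕ) (hg : IsNumbrix g)
    (hcol : ∀ i : Fin m, g (i, ⟨0, hn⟩) =
      if Even i.val then i.val * n + 1 else (i.val + 1) * n) :
    g = fun c : Fin m × Fin n =>
      if Even c.1.val then c.1.val * n + c.2.val + 1
      else c.1.val * n + (n - c.2.val) := by
  refine hg.eq_of_eq_on_col_zero zigzag_injective zigzag_mem_Icc zigzag_row_succ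
    fun ⟨i, j⟩ hj => ?_
  obtain rfl : j = ⟨0, hn⟩ := Fin.ext hj
  simp only [hcol i]
  split_ifs <;> simp only [Nat.sub_zero, add_one_mul]
end

section
/- For n ≥ 2, any single clue (c, v) with v ≠ (n+1)/2 or c not the middle cell determines a unique 1 × n Numbrix solution; moreover, if n is odd, the clue placing value (n+1)/2 at the middle cell is consistent with exactly two distinct solutions. -/
/-- Adjacency on a `1 × n` board (cells `Fin n`): differing by exactly 1. -/
def Adj1 {n : ℕ} (a b : Fin n) : Prop := a.val + 1 = b.val ∨ b.val + 1 = a.val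

/-- A `1 × n` Numbrix solution: a bijection onto `{1, …, n}` with consecutive
values on adjacent cells. -/
def IsNumbrix1 {n : ℕ} (f : Fin n → ℕ) : Prop :=
  (∀ c, 1 ≤ f c ∧ f c ≤ n) ∧ Function.Injective f ∧
    ∀ c c', f c' = f c + 1 → Adj1 c c'

/-!
Let `p k` be the cell holding the value `k + 1`. Consecutive values sit on adjacent cells, so
`p` moves by `±1` at each step; it cannot turn back, since that would revisit the cell it just
left. Hence `p` is `k ↦ p 0 + k` or `k ↦ p 0 - k`, and since it must cover all `n` cells it starts
at an end of the board: the solution is `j ↦ j + 1` or `j ↦ n - j`. The two agree exactly at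
the cell `c` with `2c + 1 = n`, which for odd `n` is the middle cell, where both place `(n + 1) / 2`.
-/

open Function

section Walk

variable {N : ℕ} {p : ℕ → ℤ}

theorem sub_eq_sub_of_injOn_of_abs_sub_eq_one (hinj : Set.InjOn p (Set.Iio N))
    (hstep : ∀ k, k + 1 < N → |p (k + 1) - p k| = 1) {k : ℕ} (hk : k + 2 < N) :
    p (k + 2) - p (k + 1) = p (k + 1) - p k := by
  have h₀ := hstep k (by omega)
  have h₁ : |p (k + 2) - p (k + 1)| = 1 := hstep (k + 1) hk
  rw [abs_eq zero_le_one] at h₀ h₁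
  by_contra hturn
  have hback : p (k + 2) = p k := by omega
  have := hinj (by simp; omega) (by simp; omega) hback
  omega

theorem exists_eq_add_mul_of_injOn_of_abs_sub_eq_one (hinj : Set.InjOn p (Set.Iio N))
    (hstep : ∀ k, k + 1 < N → |p (k + 1) - p k| = 1) :
    ∃ s : ℤ, |s| = 1 ∧ ∀ k < N, p k = p 0 + s * k := by
  rcases lt_or_ge N 2 with hN | hN
  · refine ⟨1, abs_one, fun k hk => ?_⟩
    obtain rfl : k = 0 := by omega
    simp
  have hconst : ∀ k, k + 1 < N → p (k + 1) - p k = p 1 - p 0 := by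
    intro k hk
    induction k with
    | zero => rfl
    | succ k ih => rw [sub_eq_sub_of_injOn_of_abs_sub_eq_one hinj hstep hk, ih (by omega)]
  refine ⟨p 1 - p 0, hstep 0 (by omega), fun k hk => ?_⟩
  induction k with
  | zero => simp
  | succ k ih =>
    have := hconst k hk
    push_cast
    linarith [ih (by omega)]

end Walk

theorem Fin.eq_id_or_eq_rev_of_injective_of_adj1 {n : ℕ} {σ : Fin n → Fin n}
    (hσ : Injective σ) (hadj : ∀ i j : Fin n, i.val + 1 = j.val → Adj1 (σ i) (σ j)) :
    σ = id ∨ σ = Fin.rev := by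
  obtain ⟨p, hp⟩ : ∃ p : ℕ → ℤ, ∀ k (h : k < n), p k = σ ⟨k, h⟩ :=
    ⟨fun k => if h : k < n then (σ ⟨k, h⟩ : ℕ) else 0, fun k h => dif_pos h⟩
  obtain ⟨s, hs, hlin⟩ := exists_eq_add_mul_of_injOn_of_abs_sub_eq_one (N := n) (p := p)
    (fun k hk l hl hkl => by
      simp only [Set.mem_Iio] at hk hl
      rw [hp k hk, hp l hl, Nat.cast_inj, Fin.val_inj] at hkl
      exact Fin.mk.inj (hσ hkl))
    (fun k hk => by
      have h := hadj ⟨k, by omega⟩ ⟨k + 1, hk⟩ rfl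
      rw [hp k (by omega), hp (k + 1) hk, abs_eq zero_le_one]
      unfold Adj1 at h
      omega)
  rcases n.eq_zero_or_pos with rfl | hn
  · exact Or.inl (funext fun i => i.elim0)
  have hσp : ∀ i : Fin n, ((σ i : ℕ) : ℤ) = p 0 + s * i :=
    fun i => (hp i i.isLt).symm.trans (hlin i i.isLt)
  have h₀ : ((σ ⟨0, hn⟩ : ℕ) : ℤ) = p 0 := by simpa using hσp ⟨0, hn⟩
  have hlast : ((σ ⟨n - 1, by omega⟩ : ℕ) : ℤ) = p 0 + s * (n - 1) := by
    simpa [Nat.cast_pred hn] using hσp ⟨n - 1, by omega⟩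
  have := (σ ⟨n - 1, by omega⟩).isLt
  rw [abs_eq zero_le_one] at hs
  rcases hs with rfl | rfl
  · refine Or.inl (funext fun i => Fin.ext ?_)
    have := hσp i
    rw [id_eq]
    omega
  · refine Or.inr (funext fun i => Fin.ext ?_)
    have := hσp i
    rw [Fin.val_rev]
    omega

def ascSolution (n : ℕ) : Fin n → ℕ := fun j => j.val + 1

def descSolution (n : ℕ) : Fin n → ℕ := fun j => n - j.val

theorem isNumbrix1_ascSolution {n : ℕ} : IsNumbrix1 (ascSolution n) := by
  refine ⟨fun c => ⟨by simp [ascSolution], c.isLt⟩, fun a b hab => ?_, fun c c' h => ?_⟩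
  · simpa [ascSolution, Fin.val_inj] using hab
  · simp only [ascSolution] at h
    exact Or.inl (by omega)

theorem isNumbrix1_descSolution {n : ℕ} : IsNumbrix1 (descSolution n) := by
  refine ⟨fun c => ?_, fun a b hab => ?_, fun c c' h => ?_⟩ <;> simp only [descSolution] at *
  · have := c.isLt
    omega
  · have := a.isLt
    have := b.isLt
    exact Fin.ext (by omega)
  · have := c.isLt
    have := c'.isLt
    exact Or.inr (by omega)

theorem IsNumbrix1.eq_ascSolution_or_eq_descSolution {n : ℕ} {f : Fin n → ℕ}
    (hf : IsNumbrix1 f) : f = ascSolution n ∨ f = descSolution n := by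
  obtain ⟨hbd, hinj, hadj⟩ := hf
  let e : Fin n → Fin n := fun c => ⟨f c - 1, by have := hbd c; omega⟩
  have hfe : ∀ c, f c = e c + 1 := fun c => by
    have := hbd c
    simp only [e]
    omega
  have he : Bijective e :=
    Finite.injective_iff_bijective.mp fun a b hab => hinj (by rw [hfe a, hfe b, hab])
  let σ := Equiv.ofBijective e he
  have hσ : ∀ c, σ.symm (e c) = c := σ.symm_apply_apply
  -- `σ.symm i` is the cell holding the value `i + 1`
  rcases Fin.eq_id_or_eq_rev_of_injective_of_adj1 σ.symm.injective (fun i j hij => hadj _ _ (by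
    rw [hfe, hfe, show e (σ.symm i) = i from σ.apply_symm_apply i,
      show e (σ.symm j) = j from σ.apply_symm_apply j, hij])) with hid | hrev
  · left
    funext c
    have := congrFun hid (e c)
    rw [hσ, id_eq] at this
    rw [hfe, ascSolution, ← this]
  · right
    funext c
    have := congrArg Fin.val (congrFun hrev (e c))
    rw [hσ, Fin.val_rev] at this
    rw [hfe, descSolution]
    omega

theorem one_by_n_single_clue (n : ℕ) (hn : 2 ≤ n) :
    (∀ (c : Fin n) (v : ℕ),
      (∃ f : Fin n → ℕ, IsNumbrix1 f ∧ f c = v) →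
      (v ≠ (n + 1) / 2 ∨ c.val ≠ (n - 1) / 2) →
      ∃! f : Fin n → ℕ, IsNumbrix1 f ∧ f c = v) ∧
    (Odd n →
      ∃ f g : Fin n → ℕ, f ≠ g ∧
        IsNumbrix1 f ∧ IsNumbrix1 g ∧
        f ⟨(n - 1) / 2, by omega⟩ = (n + 1) / 2 ∧
        g ⟨(n - 1) / 2, by omega⟩ = (n + 1) / 2 ∧
        ∀ h : Fin n → ℕ, IsNumbrix1 h →
          h ⟨(n - 1) / 2, by omega⟩ = (n + 1) / 2 → h = f ∨ h = g) := by
  refine ⟨fun c v ⟨f, hf, hfc⟩ hclue => ⟨f, ⟨hf, hfc⟩, fun g ⟨hg, hgc⟩ => ?_⟩, fun hodd => ?_⟩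
  · have := c.isLt
    rcases hf.eq_ascSolution_or_eq_descSolution with rfl | rfl <;>
      rcases hg.eq_ascSolution_or_eq_descSolution with rfl | rfl <;>
      first
      | rfl
      | simp only [ascSolution, descSolution] at hfc hgc; omega
  · obtain ⟨m, rfl⟩ := hodd
    refine ⟨ascSolution _, descSolution _, fun heq => ?_, isNumbrix1_ascSolution,
      isNumbrix1_descSolution, ?_, ?_, fun h hh _ => hh.eq_ascSolution_or_eq_descSolution⟩
    · have := congrFun heq ⟨0, by omega⟩
      simp only [ascSolution, descSolution] at this
      omega
    all_goals simp only [ascSolution, descSolution]; omega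
end

section
/- For n ≥ 2, the two clues placing value 1 at cell (0, 0) and value 2n at cell (1, 0) define a unique 2 × n Numbrix solution; hence the minimum number of clues needed to define a 2 × n puzzle is at most 2, and combined with the existence of a circular solution it is exactly 2. -/
/-!
Read along row `0` and back along row `1`, the cells of the `2 × n` board form a closed tour.
Numbering a closed tour of length at least `3` from any cell, in either direction, gives two
different solutions with the same value at that cell, so no single clue defines a puzzle.
With `1` at `(0, 0)` and `2n` at `(1, 0)`, induction over the columns shows that the successor of
`(0, j)` and the predecessor of `(1, j)` must lie in column `j + 1`, since every other neighbour
is already numbered; hence the solution is the tour numbered from `(0, 0)`.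
-/

section Numbrix

variable {m n : ℕ}

theorem IsNumbrix.exists_apply_eq_s10 {f : Fin m × Fin n → ℕ} (hf : IsNumbrix f) {t : ℕ}
    (ht : 1 ≤ t ∧ t ≤ m * n) : ∃ c, f c = t := by
  obtain ⟨c, -, hc⟩ := Finset.surj_on_of_inj_on_of_card_le (s := Finset.univ)
    (t := Finset.Icc 1 (m * n)) (fun c _ => f c) (fun c _ => Finset.mem_Icc.mpr (hf.1 c))
    (fun _ _ _ _ h => hf.2.1 h) (by simp) t (Finset.mem_Icc.mpr ht)
  exact ⟨c, hc.symm⟩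

/-- The cell carrying `s c` under `f` is adjacent to `p`, and lies outside `S` because `s` is
injective. -/
theorem IsNumbrix.apply_eq_of_eqOn {f s : Fin m × Fin n → ℕ} (hf : IsNumbrix f)
    (hs : IsNumbrix s) {S : Set (Fin m × Fin n)} (hfs : Set.EqOn f s S) {p c : Fin m × Fin n}
    (hp : p ∈ S) (hc : c ∉ S) (hsc : s c = s p + 1 ∨ s p = s c + 1)
    (hexit : ∀ c', Adj p c' → c' ∉ S → c' = c) : f c = s c := by
  obtain ⟨c', hc'⟩ := hf.exists_apply_eq_s10 (hs.1 c)
  have hadj : Adj p c' := by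
    rcases hsc with h | h
    · exact hf.2.2 p c' (by rw [hc', h, hfs hp])
    · exact (hf.2.2 c' p (by rw [hfs hp, h, hc'])).symm
  have hc'S : c' ∉ S := fun h => hc (hs.2.1 ((hfs h).symm.trans hc') ▸ h)
  obtain rfl := hexit c' hadj hc'S
  exact hc'

/-- A closed tour through all cells; values in `ZMod (m * n)`, so the last cell is followed by the
first. -/
def IsCircularNumbering (σ : Fin m × Fin n → ZMod (m * n)) : Prop :=
  Function.Injective σ ∧ ∀ c c', σ c' = σ c + 1 → Adj c c'

namespace IsCircularNumbering

variable {σ : Fin m × Fin n → ZMod (m * n)}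

theorem add_const (hσ : IsCircularNumbering σ) (K : ZMod (m * n)) :
    IsCircularNumbering fun c => σ c + K :=
  ⟨(add_left_injective K).comp hσ.1, fun c c' h => hσ.2 c c' (by linear_combination h)⟩

theorem neg (hσ : IsCircularNumbering σ) : IsCircularNumbering fun c => -σ c :=
  ⟨neg_injective.comp hσ.1, fun c c' h => (hσ.2 c' c (by linear_combination h)).symm⟩

variable [NeZero (m * n)]

theorem isNumbrix (hσ : IsCircularNumbering σ) : IsNumbrix fun c => (σ c).val + 1 := by
  refine ⟨fun c => ⟨Nat.le_add_left 1 _, (σ c).val_lt⟩,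
    fun a b h => hσ.1 (ZMod.val_injective _ (Nat.add_right_cancel h)),
    fun c c' h => hσ.2 c c' ?_⟩
  simpa using congrArg (Nat.cast : ℕ → ZMod (m * n)) h

theorem surjective (hσ : IsCircularNumbering σ) : Function.Surjective σ :=
  ((Fintype.bijective_iff_injective_and_card σ).mpr ⟨hσ.1, by simp⟩).2

/-- The tour numbered forwards and backwards from `c`; the two differ because `2 ≠ 0` in
`ZMod (m * n)`. -/
theorem exists_ne_isNumbrix (hσ : IsCircularNumbering σ) (h3 : 3 ≤ m * n)
    (c : Fin m × Fin n) {v : ℕ} (hv : 1 ≤ v ∧ v ≤ m * n) :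
    ∃ g h : Fin m × Fin n → ℕ, IsNumbrix g ∧ IsNumbrix h ∧ g c = v ∧ h c = v ∧ g ≠ h := by
  have hval : ((v - 1 : ℕ) : ZMod (m * n)).val + 1 = v := by
    rw [ZMod.val_natCast_of_lt (by omega)]
    omega
  refine ⟨_, _, (hσ.add_const ((v - 1 : ℕ) - σ c)).isNumbrix,
    (hσ.neg.add_const ((v - 1 : ℕ) + σ c)).isNumbrix, by simpa using hval, by simpa using hval,
    fun heq => ?_⟩
  have hsame : ∀ d, σ d + ((v - 1 : ℕ) - σ c) = -σ d + ((v - 1 : ℕ) + σ c) := fun d =>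
    ZMod.val_injective _ (Nat.add_right_cancel (congrFun heq d))
  obtain ⟨d₀, hd₀⟩ := hσ.surjective 0
  obtain ⟨d₁, hd₁⟩ := hσ.surjective 1
  have htwo : ((2 : ℕ) : ZMod (m * n)) = 0 := by
    have h₀ := hsame d₀
    have h₁ := hsame d₁
    rw [hd₀] at h₀
    rw [hd₁] at h₁
    push_cast
    linear_combination h₁ - h₀
  have := Nat.le_of_dvd two_pos ((ZMod.natCast_eq_zero_iff _ _).mp htwo)
  omega

end IsCircularNumbering

end Numbrix

section TwoByN

variable {n : ℕ}

def boundaryPos (c : Fin 2 × Fin n) : ℕ :=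
  if c.1 = 0 then c.2 else 2 * n - 1 - c.2

theorem boundaryPos_lt (c : Fin 2 × Fin n) : boundaryPos c < 2 * n := by
  unfold boundaryPos
  split <;> omega

theorem boundaryPos_injective : Function.Injective (boundaryPos (n := n)) := by
  intro a b h
  unfold boundaryPos at h
  ext <;> split_ifs at h <;> grind

theorem adj_of_boundaryPos {a b : Fin 2 × Fin n}
    (h : boundaryPos b = boundaryPos a + 1 ∨ boundaryPos a + 1 = 2 * n ∧ boundaryPos b = 0) :
    Adj a b := by
  unfold boundaryPos at h
  unfold Adj
  split_ifs at h <;> grind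

theorem isCircularNumbering_boundaryPos :
    IsCircularNumbering fun c : Fin 2 × Fin n => (boundaryPos c : ZMod (2 * n)) := by
  refine ⟨fun a b h => boundaryPos_injective ?_, fun a b h => adj_of_boundaryPos ?_⟩
  · rwa [ZMod.natCast_eq_natCast_iff', Nat.mod_eq_of_lt (boundaryPos_lt a),
      Nat.mod_eq_of_lt (boundaryPos_lt b)] at h
  · have ha := boundaryPos_lt a
    rw [← Nat.cast_succ, ZMod.natCast_eq_natCast_iff', Nat.mod_eq_of_lt (boundaryPos_lt b)] at h
    rcases (Nat.succ_le_of_lt ha).lt_or_eq with hlt | heq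
    · exact .inl (h.trans (Nat.mod_eq_of_lt hlt))
    · exact .inr ⟨heq, h.trans (heq ▸ Nat.mod_self _)⟩

theorem isNumbrix_boundaryPos_add_one (hn : 0 < n) :
    IsNumbrix fun c : Fin 2 × Fin n => boundaryPos c + 1 := by
  have : NeZero (2 * n) := ⟨by omega⟩
  simpa only [ZMod.val_natCast_of_lt (boundaryPos_lt _)] using
    isCircularNumbering_boundaryPos.isNumbrix

theorem eq_boundaryPos_add_one (hn : 0 < n) {f : Fin 2 × Fin n → ℕ} (hf : IsNumbrix f)
    (h₀ : f (0, ⟨0, hn⟩) = 1) (h₁ : f (1, ⟨0, hn⟩) = 2 * n) :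
    f = fun c => boundaryPos c + 1 := by
  have hs := isNumbrix_boundaryPos_add_one hn
  have hcols : ∀ j : ℕ, Set.EqOn f (fun c => boundaryPos c + 1) {c | c.2.val ≤ j} := by
    intro j
    induction j with
    | zero =>
      rintro ⟨i, k⟩ (hk : k.val ≤ 0)
      obtain rfl : k = ⟨0, hn⟩ := Fin.ext (Nat.le_zero.mp hk)
      fin_cases i
      · simpa [boundaryPos] using h₀
      · simpa [boundaryPos, h₁] using (Nat.sub_add_cancel (by omega : 1 ≤ 2 * n)).symm
    | succ j ih =>
      rintro c (hc : c.2.val ≤ j + 1)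
      rcases hc.lt_or_eq with hlt | heq
      · exact ih (Nat.le_of_lt_succ hlt)
      refine hf.apply_eq_of_eqOn hs ih (p := (c.1, ⟨j, by omega⟩)) (show j ≤ j from le_rfl)
        (by simp [heq]) ?_ ?_
      · dsimp only [boundaryPos]
        split <;> omega
      · rintro c' hadj hc'
        simp only [Set.mem_ofPred_eq, not_le] at hc'
        rcases hadj with ⟨hrow, hcol⟩ | ⟨hcol, -⟩
        · exact Prod.ext hrow.symm (Fin.ext (by dsimp only at hcol; omega))
        · have := congrArg Fin.val hcol
          dsimp only at this
          omega
  funext c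
  exact hcols (n - 1) (show c.2.val ≤ n - 1 by omega)

end TwoByN

theorem two_by_n_min_clues (n : ℕ) (hn : 2 ≤ n) :
    (∃! f : Fin 2 × Fin n → ℕ, IsNumbrix f ∧
      f (0, ⟨0, by omega⟩) = 1 ∧ f (1, ⟨0, by omega⟩) = 2 * n) ∧
    (∀ (c : Fin 2 × Fin n) (v : ℕ),
      (∃ f : Fin 2 × Fin n → ℕ, IsNumbrix f ∧ f c = v) →
      ∃ g h : Fin 2 × Fin n → ℕ,
        IsNumbrix g ∧ IsNumbrix h ∧ g c = v ∧ h c = v ∧ g ≠ h) := by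
  have : NeZero (2 * n) := ⟨by omega⟩
  refine ⟨⟨fun c => boundaryPos c + 1, ⟨isNumbrix_boundaryPos_add_one (by omega),
    by simp [boundaryPos], by simpa [boundaryPos] using Nat.sub_add_cancel (by omega : 1 ≤ 2 * n)⟩,
    fun f ⟨hf, h₀, h₁⟩ => eq_boundaryPos_add_one (by omega) hf h₀ h₁⟩, ?_⟩
  rintro c v ⟨f, hf, rfl⟩
  exact isCircularNumbering_boundaryPos.exists_ne_isNumbrix (by omega) c (hf.1 c)
end
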